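/- Let K be a finite type with at least two elements and, for each κ ∈ K, let I κ and J κ be nonempty finite types; set Ω = Σ κ, (I κ × J κ) and D = card Ω, and let ρ_mix = (1/D) • (1 : Matrix Ω Ω ℂ) be the totally mixed state. Then for every ε > 0 there exists a positive semidefinite trace-1 matrix ρ' : Matrix Ω Ω ℂ that is not block-separable and satisfies ‖ρ' − ρ_mix‖ < ε (in the entrywise supremum norm on matrices). -/

import Mathlib

/-!
Pick points `a`, `b` in two different blocks and a state `σ` with `σ a b ≠ 0`, such as the
projection onto `(e_a + e_b)/√2`. For `0 < t < 1` the mixture `(1 - t) ρ_mix + t σ` is again a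
state, and since `ρ_mix` is diagonal its `(a, b)` entry is `t σ a b ≠ 0`. Block-separable states
are block diagonal, so the mixture is not block-separable, while it tends to `ρ_mix` as `t → 0`.
-/

open scoped BigOperators ComplexOrder

attribute [local instance] Matrix.normedAddCommGroup

/-- A matrix on `Ω = Σ κ, I κ × J κ` is block-separable if it is a finite convex
combination of rank-one projections onto unit vectors each supported in a single
block and there of product form. -/
def BlockSep {K : Type*} [Fintype K] {I J : K → Type*}
    [∀ κ, Fintype (I κ)] [∀ κ, Fintype (J κ)]
    (ρ : Matrix ((κ : K) × (I κ × J κ)) ((κ : K) × (I κ × J κ)) ℂ) : Prop :=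
  ∃ (n : ℕ) (lam : Fin n → ℝ) (v : Fin n → ((κ : K) × (I κ × J κ)) → ℂ),
    (∀ t, 0 ≤ lam t) ∧ (∑ t, lam t = 1) ∧
    (∀ t, ∑ a, Complex.normSq (v t a) = 1) ∧
    (∀ t, ∃ (κ : K) (x : I κ → ℂ) (y : J κ → ℂ),
      (∀ (i : I κ) (j : J κ), v t ⟨κ, (i, j)⟩ = x i * y j) ∧
      (∀ κ' : K, κ' ≠ κ → ∀ b : I κ' × J κ', v t ⟨κ', b⟩ = 0)) ∧
    ρ = ∑ t, (lam t : ℂ) • Matrix.of (fun a b => v t a * starRingEnd ℂ (v t b))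

open Matrix Filter Topology

def IsDensityMatrix {n : Type*} [Fintype n] (ρ : Matrix n n ℂ) : Prop :=
  ρ.PosSemidef ∧ ρ.trace = 1

section DensityMatrix

variable {n : Type*} [Fintype n]

theorem isDensityMatrix_totallyMixed [Nonempty n] [DecidableEq n] :
    IsDensityMatrix ((Fintype.card n : ℂ)⁻¹ • (1 : Matrix n n ℂ)) := by
  refine ⟨PosSemidef.one.smul (inv_nonneg.mpr (Nat.cast_nonneg _)), ?_⟩
  rw [trace_smul, trace_one, smul_eq_mul, inv_mul_cancel₀ (by simp)]

theorem IsDensityMatrix.lineMap {ρ σ : Matrix n n ℂ} (hρ : IsDensityMatrix ρ)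
    (hσ : IsDensityMatrix σ) {t : ℝ} (ht₀ : 0 ≤ t) (ht₁ : t ≤ 1) :
    IsDensityMatrix (AffineMap.lineMap ρ σ t) := by
  rw [AffineMap.lineMap_apply_module]
  refine ⟨(hρ.1.smul (sub_nonneg.mpr ht₁)).add (hσ.1.smul ht₀), ?_⟩
  rw [trace_add, trace_smul, trace_smul, hρ.2, hσ.2]
  simp

theorem exists_isDensityMatrix_apply_ne_zero [DecidableEq n] {a b : n} (hab : a ≠ b) :
    ∃ σ : Matrix n n ℂ, IsDensityMatrix σ ∧ σ a b ≠ 0 := by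
  set v : n → ℂ := Pi.single a 1 + Pi.single b 1
  refine ⟨(2 : ℂ)⁻¹ • vecMulVec v (star v),
    ⟨(posSemidef_vecMulVec_self_star v).smul (inv_nonneg.mpr zero_le_two), ?_⟩, ?_⟩
  · rw [trace_smul, trace_vecMulVec]
    norm_num [v, hab, hab.symm]
  · simp [v, vecMulVec_apply, hab, hab.symm]

end DensityMatrix

theorem BlockSep.apply_eq_zero_of_fst_ne {K : Type*} [Fintype K] {I J : K → Type*}
    [∀ κ, Fintype (I κ)] [∀ κ, Fintype (J κ)]
    {ρ : Matrix ((κ : K) × (I κ × J κ)) ((κ : K) × (I κ × J κ)) ℂ}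
    (h : BlockSep ρ) {p q : (κ : K) × (I κ × J κ)} (hpq : p.1 ≠ q.1) : ρ p q = 0 := by
  obtain ⟨n, lam, v, -, -, -, hblock, rfl⟩ := h
  rw [Matrix.sum_apply]
  refine Finset.sum_eq_zero fun t _ => ?_
  obtain ⟨κ, -, -, -, hzero⟩ := hblock t
  have : v t p = 0 ∨ v t q = 0 := by
    by_cases hp : p.1 = κ
    · exact .inr (hzero q.1 (hp ▸ hpq.symm) q.2)
    · exact .inl (hzero p.1 hp p.2)
  rcases this with h | h <;> simp [h]

theorem totally_mixed_state_on_border_of_separable_states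
    {K : Type*} [Fintype K] [DecidableEq K] (hK : 2 ≤ Fintype.card K)
    {I J : K → Type*}
    [∀ κ, Fintype (I κ)] [∀ κ, Nonempty (I κ)] [∀ κ, DecidableEq (I κ)]
    [∀ κ, Fintype (J κ)] [∀ κ, Nonempty (J κ)] [∀ κ, DecidableEq (J κ)]
    (ε : ℝ) (hε : 0 < ε) :
    ∃ ρ' : Matrix ((κ : K) × (I κ × J κ)) ((κ : K) × (I κ × J κ)) ℂ,
      ρ'.PosSemidef ∧ ρ'.trace = 1 ∧ ¬ BlockSep ρ' ∧
      ‖ρ' - ((Fintype.card ((κ : K) × (I κ × J κ)) : ℂ))⁻¹ •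
          (1 : Matrix ((κ : K) × (I κ × J κ)) ((κ : K) × (I κ × J κ)) ℂ)‖ < ε := by
  obtain ⟨κ₁, κ₂, hκ⟩ := Fintype.exists_pair_of_one_lt_card hK
  let a : (κ : K) × (I κ × J κ) := ⟨κ₁, Classical.arbitrary _⟩
  let b : (κ : K) × (I κ × J κ) := ⟨κ₂, Classical.arbitrary _⟩
  have : Nonempty ((κ : K) × (I κ × J κ)) := ⟨a⟩
  obtain ⟨σ, hσ, hσab⟩ :=
    exists_isDensityMatrix_apply_ne_zero (a := a) (b := b) (ne_of_apply_ne Sigma.fst hκ)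
  set ρ := ((Fintype.card ((κ : K) × (I κ × J κ)) : ℂ))⁻¹ •
    (1 : Matrix ((κ : K) × (I κ × J κ)) ((κ : K) × (I κ × J κ)) ℂ)
  have hρ : IsDensityMatrix ρ := isDensityMatrix_totallyMixed
  have hρab : ρ a b = 0 := by simp [ρ, one_apply, a, b, hκ]
  have hpath : Tendsto (fun t : ℝ => AffineMap.lineMap ρ σ t) (𝓝[>] 0) (𝓝 ρ) := by
    simpa using ((AffineMap.lineMap_continuous (R := ℝ) (p := ρ) (q := σ)).tendsto 0).mono_left
      nhdsWithin_le_nhds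
  obtain ⟨t, ⟨ht₀, ht₁⟩, hdist⟩ := (Filter.Eventually.and (Ioo_mem_nhdsGT one_pos)
    (hpath.eventually (Metric.ball_mem_nhds ρ hε))).exists
  obtain ⟨hpsd, htr⟩ := hρ.lineMap hσ ht₀.le ht₁.le
  refine ⟨_, hpsd, htr, fun hsep => ?_, by simpa [dist_eq_norm] using hdist⟩
  have := hsep.apply_eq_zero_of_fst_ne (p := a) (q := b) hκ
  simp [AffineMap.lineMap_apply_module, hρab, ht₀.ne', hσab] at this
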